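/- Let θ > 0 and n ∈ (1,3). Then problem (P) has at most one solution: if H₁ and H₂ are both solutions of (P), then H₁ = H₂ on [0,1]. (The proof proceeds by showing the auxiliary function Φ := (H₁−H₂)(H₁−H₂)″ − ((H₁−H₂)′)²/2 vanishes at x = 0, is nondecreasing on (0,1), and forces ((H₁−H₂)²)′ ≡ 0.) -/

import Mathlib

/-!
Write `w := H₁ - H₂`. Since `x - 1 < 0` and `t ↦ t ^ (1 - n)` is decreasing, the equation gives
`w w''' ≥ 0` on `(0, 1)`, so `Φ := w w'' - w'² / 2` is nondecreasing (`Φ' = w w'''`).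
`Φ` is nonnegative: if `Φ(x₀) < 0`, then `w w'' < 0` near `0` because `w' → 0` there, so `w` has
a fixed sign on some `(0, c)` and `w''` the opposite one, which is incompatible with
`w(0) = w'(0) = 0`. Hence `(w w')' = w'² + w w'' ≥ 0`, and `w w' → 0` at `1` forces `w w' ≤ 0`,
so `w²` is nonincreasing from `w(0)² = 0`.
-/

open Set Filter

/-- Problem (P): the similarity boundary-value problem for the thin-film equation. -/
def IsSolP (n θ : ℝ) (H : ℝ → ℝ) : Prop :=
  ContDiffOn ℝ 1 H (Set.Icc 0 1) ∧
  ContDiffOn ℝ 3 H (Set.Ioo 0 1) ∧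
  (∀ x ∈ Set.Ioo (0:ℝ) 1, 0 < H x) ∧
  (∀ x ∈ Set.Ioo (0:ℝ) 1, H x ^ (n - 1) * deriv^[3] H x = -1 + x) ∧
  H 0 = 0 ∧
  derivWithin H (Set.Icc 0 1) 0 = θ ∧
  derivWithin H (Set.Icc 0 1) 1 = 0

open Topology

section Calculus

variable {a b x : ℝ} {f : ℝ → ℝ}

theorem ContDiffOn.hasDerivAt_deriv {n : WithTop ℕ∞} {s : Set ℝ} (hf : ContDiffOn ℝ n f s)
    (hs : IsOpen s) (hn : n ≠ 0) (hx : x ∈ s) : HasDerivAt f (deriv f x) x :=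
  ((hf.differentiableOn hn x hx).differentiableAt (hs.mem_nhds hx)).hasDerivAt

theorem ContDiffOn.tendsto_deriv_nhdsWithin_Ioo (hab : a < b) (hf : ContDiffOn ℝ 1 f (Icc a b))
    (hx : x ∈ Icc a b) :
    Tendsto (deriv f) (𝓝[Ioo a b] x) (𝓝 (derivWithin f (Icc a b) x)) := by
  have hcont := hf.continuousOn_derivWithin (uniqueDiffOn_Icc hab) le_rfl x hx
  refine (hcont.tendsto.mono_left (nhdsWithin_mono _ Ioo_subset_Icc_self)).congr' ?_
  filter_upwards [self_mem_nhdsWithin] with y hy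
  exact derivWithin_of_mem_nhds (Icc_mem_nhds hy.1 hy.2)

theorem IsPreconnected.forall_pos_or_forall_neg {α : Type*} [TopologicalSpace α] {s : Set α}
    {g : α → ℝ} (hs : IsPreconnected s) (hg : ContinuousOn g s) (hne : ∀ y ∈ s, g y ≠ 0) :
    (∀ y ∈ s, 0 < g y) ∨ ∀ y ∈ s, g y < 0 := by
  by_contra! ⟨⟨y, hy, hgy⟩, z, hz, hgz⟩
  obtain ⟨t, ht, hgt⟩ := hs.intermediate_value hy hz hg ⟨hgy, hgz⟩
  exact hne t ht hgt

theorem MonotoneOn.le_of_tendsto_nhdsGT {l : ℝ} (hf : MonotoneOn f (Ioo a b))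
    (hl : Tendsto f (𝓝[>] a) (𝓝 l)) (hx : x ∈ Ioo a b) : l ≤ f x :=
  le_of_tendsto hl <| by
    filter_upwards [Ioo_mem_nhdsGT hx.1] with y hy
    exact hf ⟨hy.1, hy.2.trans hx.2⟩ hx hy.2.le

theorem MonotoneOn.le_of_tendsto_nhdsLT {l : ℝ} (hf : MonotoneOn f (Ioo a b))
    (hl : Tendsto f (𝓝[<] b) (𝓝 l)) (hx : x ∈ Ioo a b) : f x ≤ l :=
  ge_of_tendsto hl <| by
    filter_upwards [Ioo_mem_nhdsLT hx.2] with y hy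
    exact hf hx ⟨hx.1.trans hy.1, hy.2⟩ hy.1.le

theorem monotoneOn_Ioo_of_hasDerivAt_nonneg {f' : ℝ → ℝ}
    (hf : ∀ y ∈ Ioo a b, HasDerivAt f (f' y) y) (hf' : ∀ y ∈ Ioo a b, 0 ≤ f' y) :
    MonotoneOn f (Ioo a b) :=
  monotoneOn_of_hasDerivWithinAt_nonneg (convex_Ioo a b)
    (fun y hy => (hf y hy).continuousAt.continuousWithinAt)
    (by simpa only [interior_Ioo] using fun y hy => (hf y hy).hasDerivWithinAt)
    (by simpa only [interior_Ioo] using hf')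

theorem nonneg_of_deriv_deriv_nonneg (hf : DifferentiableOn ℝ f (Ioo a b))
    (hf' : DifferentiableOn ℝ (deriv f) (Ioo a b)) (hf'' : ∀ y ∈ Ioo a b, 0 ≤ deriv (deriv f) y)
    (h0 : Tendsto f (𝓝[>] a) (𝓝 0)) (h1 : Tendsto (deriv f) (𝓝[>] a) (𝓝 0))
    (hx : x ∈ Ioo a b) : 0 ≤ f x := by
  have hmono' : MonotoneOn (deriv f) (Ioo a b) :=
    monotoneOn_of_deriv_nonneg (convex_Ioo a b) hf'.continuousOn (by rwa [interior_Ioo])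
      (by rwa [interior_Ioo])
  have hmono : MonotoneOn f (Ioo a b) :=
    monotoneOn_of_deriv_nonneg (convex_Ioo a b) hf.continuousOn (by rwa [interior_Ioo])
      (by simpa only [interior_Ioo] using fun y hy => hmono'.le_of_tendsto_nhdsGT h1 hy)
  exact hmono.le_of_tendsto_nhdsGT h0 hx

theorem exists_mul_deriv_deriv_nonneg (hab : a < b) (hf : ContDiffOn ℝ 2 f (Ioo a b))
    (h0 : Tendsto f (𝓝[>] a) (𝓝 0)) (h1 : Tendsto (deriv f) (𝓝[>] a) (𝓝 0)) :
    ∃ x ∈ Ioo a b, 0 ≤ f x * deriv (deriv f) x := by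
  by_contra! hneg
  have hdf : DifferentiableOn ℝ f (Ioo a b) := hf.differentiableOn two_ne_zero
  have hdf' : DifferentiableOn ℝ (deriv f) (Ioo a b) :=
    (hf.deriv_of_isOpen isOpen_Ioo (m := 1) (by norm_num)).differentiableOn one_ne_zero
  have hmid : (a + b) / 2 ∈ Ioo a b := ⟨by linarith, by linarith⟩
  rcases isPreconnected_Ioo.forall_pos_or_forall_neg hdf.continuousOn
    (fun y hy hfy => by simpa [hfy] using hneg y hy) with hpos | hneg'
  · have := nonneg_of_deriv_deriv_nonneg (f := fun y => -f y) hdf.neg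
      (by rw [deriv.fun_neg']; exact hdf'.fun_neg)
      (fun y hy => by simpa only [deriv.fun_neg', neg_nonneg] using
        (neg_of_mul_neg_right (hneg y hy) (hpos y hy).le).le)
      (by simpa using h0.neg) (by simpa only [deriv.fun_neg', neg_zero] using h1.neg) hmid
    linarith [hpos _ hmid]
  · have := nonneg_of_deriv_deriv_nonneg hdf hdf'
      (fun y hy => (pos_of_mul_neg_right (hneg y hy) (hneg' y hy).le).le) h0 h1 hmid
    linarith [hneg' _ hmid]

end Calculus

namespace ThinFilm

variable {a b : ℝ} {w : ℝ → ℝ}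

noncomputable def phi (w : ℝ → ℝ) (x : ℝ) : ℝ :=
  w x * deriv (deriv w) x - deriv w x ^ 2 / 2

theorem hasDerivAt_phi {s : Set ℝ} {x : ℝ} (hw : ContDiffOn ℝ 3 w s) (hs : IsOpen s) (hx : x ∈ s) :
    HasDerivAt (phi w) (w x * deriv^[3] w x) x := by
  have hw' : ContDiffOn ℝ 2 (deriv w) s := hw.deriv_of_isOpen hs (by norm_num)
  have hw'' : ContDiffOn ℝ 1 (deriv (deriv w)) s := hw'.deriv_of_isOpen hs (by norm_num)
  have h0 := hw.hasDerivAt_deriv hs (by norm_num) hx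
  have h1 := hw'.hasDerivAt_deriv hs (by norm_num) hx
  have h2 : HasDerivAt (deriv (deriv w)) (deriv^[3] w x) x :=
    hw''.hasDerivAt_deriv hs (by norm_num) hx
  exact ((h0.mul h2).sub ((h1.fun_pow 2).div_const 2)).congr_deriv (by push_cast; ring)

theorem phi_nonneg (hw : ContDiffOn ℝ 3 w (Ioo a b))
    (hsign : ∀ y ∈ Ioo a b, 0 ≤ w y * deriv^[3] w y)
    (h0 : Tendsto w (𝓝[>] a) (𝓝 0)) (h1 : Tendsto (deriv w) (𝓝[>] a) (𝓝 0)) {x : ℝ}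
    (hx : x ∈ Ioo a b) : 0 ≤ phi w x := by
  by_contra! hneg
  have hmono : MonotoneOn (phi w) (Ioo a b) :=
    monotoneOn_Ioo_of_hasDerivAt_nonneg (fun y hy => hasDerivAt_phi hw isOpen_Ioo hy) hsign
  have hsmall : ∀ᶠ y in 𝓝[>] a, deriv w y ^ 2 / 2 < -phi w x := by
    have := (h1.pow 2).div_const 2
    rw [zero_pow two_ne_zero, zero_div] at this
    exact this.eventually (gt_mem_nhds (by linarith))
  obtain ⟨c, hac, hc⟩ :=
    mem_nhdsGT_iff_exists_Ioo_subset.1 (hsmall.and (Ioo_mem_nhdsGT hx.1))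
  have hcb : Ioo a c ⊆ Ioo a b := fun y hy => ⟨(hc hy).2.1, (hc hy).2.2.trans hx.2⟩
  obtain ⟨y, hy, hwy⟩ := exists_mul_deriv_deriv_nonneg hac
    ((hw.mono hcb).of_le (by norm_num)) h0 h1
  have hxy := hmono (hcb hy) hx (hc hy).2.2.le
  have := (hc hy).1
  simp only [phi] at hxy this
  linarith

theorem eqOn_zero_Ioo_of_mul_iterate_deriv_three_nonneg {L : ℝ} (hw : ContDiffOn ℝ 3 w (Ioo a b))
    (hsign : ∀ y ∈ Ioo a b, 0 ≤ w y * deriv^[3] w y)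
    (hw_a : Tendsto w (𝓝[>] a) (𝓝 0)) (hw'_a : Tendsto (deriv w) (𝓝[>] a) (𝓝 0))
    (hw_b : Tendsto w (𝓝[<] b) (𝓝 L)) (hw'_b : Tendsto (deriv w) (𝓝[<] b) (𝓝 0)) :
    EqOn w 0 (Ioo a b) := by
  have hw0 : ∀ y ∈ Ioo a b, HasDerivAt w (deriv w y) y := fun y hy =>
    hw.hasDerivAt_deriv isOpen_Ioo (by norm_num) hy
  have hw1 : ∀ y ∈ Ioo a b, HasDerivAt (deriv w) (deriv (deriv w) y) y := fun y hy =>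
    (hw.deriv_of_isOpen isOpen_Ioo (m := 2) (by norm_num)).hasDerivAt_deriv isOpen_Ioo
      (by norm_num) hy
  -- `(w w')' = w'² + w w'' = Φ + 3 w'² / 2`
  have hmono : MonotoneOn (fun y => w y * deriv w y) (Ioo a b) :=
    monotoneOn_Ioo_of_hasDerivAt_nonneg (fun y hy => (hw0 y hy).mul (hw1 y hy)) fun y hy => by
      have := phi_nonneg hw hsign hw_a hw'_a hy
      simp only [phi] at this
      nlinarith [sq_nonneg (deriv w y)]
  have hle : ∀ y ∈ Ioo a b, w y * deriv w y ≤ 0 := fun y hy =>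
    hmono.le_of_tendsto_nhdsLT (by simpa using hw_b.mul hw'_b) hy
  have hsq : MonotoneOn (fun y => -w y ^ 2) (Ioo a b) :=
    monotoneOn_Ioo_of_hasDerivAt_nonneg (fun y hy => ((hw0 y hy).fun_pow 2).neg) fun y hy => by
      push_cast
      nlinarith [hle y hy]
  intro x hx
  have := hsq.le_of_tendsto_nhdsGT (by simpa using (hw_a.pow 2).neg) hx
  simpa using this

theorem eqOn_zero_of_mul_iterate_deriv_three_nonneg (hab : a < b)
    (hw₁ : ContDiffOn ℝ 1 w (Icc a b)) (hw₃ : ContDiffOn ℝ 3 w (Ioo a b))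
    (hsign : ∀ y ∈ Ioo a b, 0 ≤ w y * deriv^[3] w y) (hwa : w a = 0)
    (hw'a : derivWithin w (Icc a b) a = 0) (hw'b : derivWithin w (Icc a b) b = 0) :
    EqOn w 0 (Icc a b) := by
  have ha : a ∈ Icc a b := left_mem_Icc.2 hab.le
  have hb : b ∈ Icc a b := right_mem_Icc.2 hab.le
  have hlim : ∀ x ∈ Icc a b, Tendsto w (𝓝[Ioo a b] x) (𝓝 (w x)) := fun x hx =>
    (hw₁.continuousOn x hx).tendsto.mono_left (nhdsWithin_mono _ Ioo_subset_Icc_self)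
  have hw_a := hlim a ha
  have hw'_a := hw₁.tendsto_deriv_nhdsWithin_Ioo hab ha
  have hw_b := hlim b hb
  have hw'_b := hw₁.tendsto_deriv_nhdsWithin_Ioo hab hb
  rw [nhdsWithin_Ioo_eq_nhdsGT hab, hwa] at hw_a
  rw [nhdsWithin_Ioo_eq_nhdsGT hab, hw'a] at hw'_a
  rw [nhdsWithin_Ioo_eq_nhdsLT hab] at hw_b
  rw [nhdsWithin_Ioo_eq_nhdsLT hab, hw'b] at hw'_b
  exact (eqOn_zero_Ioo_of_mul_iterate_deriv_three_nonneg hw₃ hsign hw_a hw'_a hw_b hw'_b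
    ).of_subset_closure hw₁.continuousOn continuousOn_const Ioo_subset_Icc_self
      (closure_Ioo hab.ne).ge

theorem sub_mul_sub_nonneg_of_rpow_mul_eq {n p q u v c : ℝ} (hn : 1 ≤ n) (hp : 0 < p)
    (hq : 0 < q) (hc : c ≤ 0) (hu : p ^ (n - 1) * u = c) (hv : q ^ (n - 1) * v = c) :
    0 ≤ (p - q) * (u - v) := by
  wlog hqp : q ≤ p generalizing p q u v
  · nlinarith [this hq hp hv hu (le_of_not_ge hqp)]
  have hqn : 0 < q ^ (n - 1) := Real.rpow_pos_of_pos hq _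
  have hle : q ^ (n - 1) ≤ p ^ (n - 1) := Real.rpow_le_rpow hq.le hqp (by linarith)
  have hv0 : v ≤ 0 := by nlinarith
  have hvu : v ≤ u := by nlinarith
  exact mul_nonneg (sub_nonneg.2 hqp) (sub_nonneg.2 hvu)

theorem sub_mul_iterate_deriv_three_sub_nonneg {n θ x : ℝ} {H₁ H₂ : ℝ → ℝ} (hn : 1 ≤ n)
    (h₁ : IsSolP n θ H₁) (h₂ : IsSolP n θ H₂) (hx : x ∈ Ioo 0 1) :
    0 ≤ (H₁ - H₂) x * deriv^[3] (H₁ - H₂) x := by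
  have hx' := isOpen_Ioo.mem_nhds hx
  rw [← iteratedDeriv_eq_iterate,
    iteratedDeriv_sub (h₁.2.1.contDiffAt hx') (h₂.2.1.contDiffAt hx'),
    iteratedDeriv_eq_iterate, iteratedDeriv_eq_iterate]
  exact sub_mul_sub_nonneg_of_rpow_mul_eq hn (h₁.2.2.1 x hx) (h₂.2.2.1 x hx)
    (by linarith [hx.2]) (h₁.2.2.2.1 x hx) (h₂.2.2.2.1 x hx)

end ThinFilm

theorem thinfilm_uniqueness_n_gt_one_general (n θ : ℝ) (hn1 : 1 < n) :
    ∀ H₁ H₂ : ℝ → ℝ, IsSolP n θ H₁ → IsSolP n θ H₂ →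
      Set.EqOn H₁ H₂ (Set.Icc 0 1) := by
  intro H₁ H₂ h₁ h₂
  have ⟨hC₁, hC₃₁, _, _, h0₁, hθ₁, h1₁⟩ := h₁
  have ⟨hC₂, hC₃₂, _, _, h0₂, hθ₂, h1₂⟩ := h₂
  have hderiv : ∀ x ∈ Icc (0 : ℝ) 1, derivWithin (H₁ - H₂) (Icc 0 1) x =
      derivWithin H₁ (Icc 0 1) x - derivWithin H₂ (Icc 0 1) x := fun x hx =>
    derivWithin_sub (hC₁.differentiableOn one_ne_zero x hx) (hC₂.differentiableOn one_ne_zero x hx)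
  have hzero := ThinFilm.eqOn_zero_of_mul_iterate_deriv_three_nonneg (w := H₁ - H₂) one_pos
    (hC₁.sub hC₂) (hC₃₁.sub hC₃₂)
    (fun _ hx => ThinFilm.sub_mul_iterate_deriv_three_sub_nonneg hn1.le h₁ h₂ hx)
    (by rw [Pi.sub_apply, h0₁, h0₂, sub_self])
    (by rw [hderiv 0 (left_mem_Icc.2 zero_le_one), hθ₁, hθ₂, sub_self])
    (by rw [hderiv 1 (right_mem_Icc.2 zero_le_one), h1₁, h1₂, sub_self])
  exact fun x hx => sub_eq_zero.1 (hzero hx)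

/-- Uniqueness for nonzero dynamic contact angles, `n ∈ (1,3)`: problem (P) has at most
one solution. -/
theorem thinfilm_uniqueness_n_gt_one (n θ : ℝ) (hn1 : 1 < n) (hn3 : n < 3) (hθ : 0 < θ) :
    ∀ H₁ H₂ : ℝ → ℝ, IsSolP n θ H₁ → IsSolP n θ H₂ →
      Set.EqOn H₁ H₂ (Set.Icc 0 1) :=
  thinfilm_uniqueness_n_gt_one_general n θ hn1
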